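/- For every signed word u with k letters, the subword-counting function N_u, which assigns to a signed word w the number of k-element subsets of the letters of w whose induced signed subword is cyclically equivalent to an isomorphic copy of u, is a cyclic equivalence invariant and a finite type invariant of degree ≤ k. -/

import Mathlib

/-- Letters are indexed by natural numbers; a signed letter carries a sign
(`true` = `+`, `false` = `−`). -/
abbrev Letter : Type := ℕ × Bool

/-- A signed word: every entry occurs exactly twice, and the two occurrences of
any letter carry the same sign. -/
def IsSignedWord (w : List Letter) : Prop :=
  ∀ p ∈ w, w.count p = 2 ∧ ∀ q ∈ w, q.1 = p.1 → q.2 = p.2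

/-- Signed words (concrete representatives; isomorphism is subsumed by cyclic
equivalence below). -/
def SignedWord : Type := {w : List Letter // IsSignedWord w}

/-- The set of letters occurring in a list of signed letters. -/
def lettersL (w : List Letter) : Finset ℕ := (w.map Prod.fst).toFinset

/-- The set of letters of a signed word. -/
def SignedWord.letters (w : SignedWord) : Finset ℕ := lettersL w.1

/-- The number of (distinct) letters of a signed word. -/
def SignedWord.numLetters (w : SignedWord) : ℕ := w.letters.card

theorem isSignedWord_filter (q : ℕ → Bool) {w : List Letter} (hw : IsSignedWord w) :
    IsSignedWord (w.filter fun p => q p.1) := by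
  intro p hp
  rw [List.mem_filter] at hp
  refine ⟨?_, fun r hr => (hw p hp.1).2 r (List.mem_filter.mp hr).1⟩
  rw [List.count_filter (p := fun r : Letter => q r.1) hp.2]
  exact (hw p hp.1).1

/-- Delete both occurrences of every letter of `T` from `w`. -/
def SignedWord.delete (w : SignedWord) (T : Finset ℕ) : SignedWord :=
  ⟨w.1.filter fun p => decide (p.1 ∉ T), isSignedWord_filter (fun a => decide (a ∉ T)) w.2⟩

/-- The induced signed subword of `w` on a set `U` of letters. -/
def SignedWord.restrict (w : SignedWord) (U : Finset ℕ) : SignedWord :=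
  ⟨w.1.filter fun p => decide (p.1 ∈ U), isSignedWord_filter (fun a => decide (a ∈ U)) w.2⟩

/-- Sign-preserving relabeling of letters. -/
def Iso (w w' : List Letter) : Prop :=
  ∃ f : ℕ ≃ ℕ, w' = w.map fun p => (f p.1, p.2)

/-- The basic move `A^ε x A^ε y ↦ x A^(−ε) y A^(−ε)`. -/
def Move (w w' : List Letter) : Prop :=
  ∃ (a : ℕ) (s : Bool) (x y : List Letter),
    w = (a, s) :: (x ++ (a, s) :: y) ∧ w' = x ++ (a, !s) :: (y ++ [(a, !s)])

/-- Cyclic equivalence of signed words: the equivalence relation generated by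
isomorphism together with the basic move. -/
def CyclicEquivL : List Letter → List Letter → Prop :=
  Relation.EqvGen fun w w' => Iso w w' ∨ Move w w'

/-- Cyclic equivalence of signed words. -/
def SignedWord.CyclicEquiv (w w' : SignedWord) : Prop := CyclicEquivL w.1 w'.1

/-- A cyclic equivalence invariant with values in `F`. -/
def WordInvariant (F : Type*) [Field F] (v : SignedWord → F) : Prop :=
  ∀ w w' : SignedWord, w.CyclicEquiv w' → v w = v w'

/-- The prolongation of `v` to the singular signed word `(w, S)` (the letters of
`S` being declared singular), given by inclusion–exclusion. -/
def prolong (F : Type*) [Field F] (v : SignedWord → F) (w : SignedWord) (S : Finset ℕ) : F :=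
  ∑ T ∈ S.powerset, (-1 : F) ^ T.card * v (w.delete T)

/-- `v` is a finite type invariant of degree ≤ `n`: it is a cyclic equivalence
invariant whose prolongation vanishes on every singular signed word with more
than `n` singular letters. -/
def FiniteTypeLe (F : Type*) [Field F] (n : ℕ) (v : SignedWord → F) : Prop :=
  WordInvariant F v ∧
    ∀ (w : SignedWord) (S : Finset ℕ), S ⊆ w.letters → n < S.card →
      prolong F v w S = 0

/-- The empty signed word `φ`. -/
def wordEmpty : SignedWord := ⟨[], by intro p hp; simp at hp⟩

/-- The one-letter positive signed word `AA`. -/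
def wordAA : SignedWord := ⟨[(0, true), (0, true)], by unfold IsSignedWord; decide⟩

/-- The one-letter negative signed word `ĀĀ`. -/
def wordAAneg : SignedWord := ⟨[(0, false), (0, false)], by unfold IsSignedWord; decide⟩

/-- The two-letter signed word `AABB`. -/
def wordAABB : SignedWord := ⟨[(0, true), (0, true), (1, true), (1, true)], by unfold IsSignedWord; decide⟩

/-- The two-letter signed word `AAB̄B̄`. -/
def wordAABnBn : SignedWord := ⟨[(0, true), (0, true), (1, false), (1, false)], by unfold IsSignedWord; decide⟩

/-- The two-letter signed word `AB̄B̄A`. -/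
def wordABnBnA : SignedWord := ⟨[(0, true), (1, false), (1, false), (0, true)], by unfold IsSignedWord; decide⟩

/-- The two-letter signed word `ABAB`. -/
def wordABAB : SignedWord := ⟨[(0, true), (1, true), (0, true), (1, true)], by unfold IsSignedWord; decide⟩

/-- The underlying list of the word `A₁A₁A₂A₂…AₙAₙ` (all letters positive). -/
def wListN (n : ℕ) : List Letter := (List.range n).flatMap fun i => [(i, true), (i, true)]

/-- `Ncount u w`: the number of `k`-element subsets of the letters of `w`
(`k` = number of letters of `u`) whose induced signed subword is cyclically
equivalent to (an isomorphic copy of) `u`. -/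
noncomputable def Ncount (u w : SignedWord) : ℕ := by
  classical
  exact (w.letters.powerset.filter fun U =>
    U.card = u.numLetters ∧ (w.restrict U).CyclicEquiv u).card

theorem prolong_add (F : Type*) [Field F] (v₁ v₂ : SignedWord → F) (w : SignedWord) (S : Finset ℕ) :
    prolong F (v₁ + v₂) w S = prolong F v₁ w S + prolong F v₂ w S := by
  simp [prolong, ← Finset.sum_add_distrib, mul_add]

theorem prolong_smul (F : Type*) [Field F] (c : F) (v : SignedWord → F) (w : SignedWord) (S : Finset ℕ) :
    prolong F (c • v) w S = c * prolong F v w S := by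
  rw [prolong, prolong, Finset.mul_sum]
  exact Finset.sum_congr rfl fun T _ => by simp [mul_left_comm]

/-- The `F`-vector space `Vₙ` of finite type invariants of degree ≤ `n`. -/
def Vn (F : Type*) [Field F] (n : ℕ) : Submodule F (SignedWord → F) where
  carrier := {v | FiniteTypeLe F n v}
  add_mem' := by
    rintro v₁ v₂ ⟨h1, h1'⟩ ⟨h2, h2'⟩
    refine ⟨fun w w' h => by simp [h1 w w' h, h2 w w' h], fun w S hS hc => ?_⟩
    rw [prolong_add, h1' w S hS hc, h2' w S hS hc, add_zero]
  zero_mem' := ⟨fun _ _ _ => rfl, fun w S hS hc => by simp [prolong]⟩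
  smul_mem' := by
    rintro c v ⟨h, h'⟩
    refine ⟨fun w w' hww => by simp [h w w' hww], fun w S hS hc => ?_⟩
    rw [prolong_smul, h' w S hS hc, mul_zero]

/-- Cyclic equivalence as a setoid on signed words. -/
def cycSetoid : Setoid SignedWord :=
  ⟨SignedWord.CyclicEquiv, fun w => Relation.EqvGen.refl w.1,
    fun h => Relation.EqvGen.symm _ _ h, fun h h' => Relation.EqvGen.trans _ _ _ h h'⟩



/-!
A relabelling of letters transports the letter sets of a word, and with them the induced
subwords, bijectively; a move `A x A y ↦ x Ā y Ā` keeps the letters and induces on every letter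
set containing `A` again a move, and on every other one the same subword. Hence `N_u` is a cyclic
equivalence invariant.

Deleting the letters of `T` leaves exactly the occurrences of `u` disjoint from `T`, so by
inclusion–exclusion the prolongation of `N_u` to `(w, S)` counts the occurrences of `u` that
contain `S`. There are none once `S` has more letters than `u`.
-/

open Finset

theorem Finset.sum_powerset_neg_one_pow_card_mul_card_filter_disjoint {R α : Type*}
    [CommRing R] [DecidableEq α] (A : Finset (Finset α)) (S : Finset α) :
    ∑ T ∈ S.powerset, (-1 : R) ^ #T * (#{U ∈ A | Disjoint U T} : R) = #{U ∈ A | S ⊆ U} := by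
  have hinner (U : Finset α) :
      ∑ T ∈ S.powerset, (if Disjoint U T then (-1 : R) ^ #T else 0) = if S ⊆ U then 1 else 0 := by
    have hpowerset : {T ∈ S.powerset | Disjoint U T} = (S \ U).powerset := by
      ext T
      simp only [mem_filter, mem_powerset, subset_sdiff, disjoint_comm]
    have halt := congrArg (Int.cast : ℤ → R) (sum_powerset_neg_one_pow_card (x := S \ U))
    push_cast at halt
    rw [← sum_filter, hpowerset, halt]
    simp only [sdiff_eq_empty_iff_subset]
  calc ∑ T ∈ S.powerset, (-1 : R) ^ #T * (#{U ∈ A | Disjoint U T} : R)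
      = ∑ U ∈ A, ∑ T ∈ S.powerset, (if Disjoint U T then (-1 : R) ^ #T else 0) := by
        rw [sum_comm]
        refine sum_congr rfl fun T _ => ?_
        rw [natCast_card_filter, mul_sum]
        simp only [mul_ite, mul_one, mul_zero]
    _ = #{U ∈ A | S ⊆ U} := by
        simp only [hinner, natCast_card_filter]

def restrictL (U : Finset ℕ) (l : List Letter) : List Letter :=
  l.filter fun p => decide (p.1 ∈ U)

/-- Stated for arbitrary lists, since the chains generating `CyclicEquivL` need not pass through
signed words. -/
noncomputable def occurrencesL (u : SignedWord) (l : List Letter) : Finset (Finset ℕ) := by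
  classical
  exact {U ∈ (lettersL l).powerset | #U = u.numLetters ∧ CyclicEquivL (restrictL U l) u.1}

theorem Ncount_eq_card_occurrencesL (u w : SignedWord) : Ncount u w = #(occurrencesL u w.1) := by
  classical
  simp only [Ncount, occurrencesL]
  congr 1

theorem card_eq_of_mem_occurrencesL {u : SignedWord} {l : List Letter} {U : Finset ℕ}
    (hU : U ∈ occurrencesL u l) : #U = u.numLetters := by
  classical
  exact (mem_filter.mp hU).2.1

theorem mem_lettersL {l : List Letter} {a : ℕ} : a ∈ lettersL l ↔ ∃ p ∈ l, p.1 = a := by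
  simp [lettersL]

theorem CyclicEquivL.congr_left {l₁ l₂ l : List Letter} (h : CyclicEquivL l₁ l₂) :
    CyclicEquivL l₁ l ↔ CyclicEquivL l₂ l :=
  ⟨(Relation.EqvGen.symm _ _ h).trans _ _ _, h.trans _ _ _⟩

section Relabel

variable {l l' : List Letter}

theorem card_occurrencesL_eq_of_relabel (e : ℕ ≃ ℕ)
    (hletters : lettersL l' = (lettersL l).map e.toEmbedding)
    (hrestrict : ∀ U, CyclicEquivL (restrictL U l) (restrictL (U.map e.toEmbedding) l'))
    (u : SignedWord) : #(occurrencesL u l) = #(occurrencesL u l') := by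
  classical
  refine card_equiv e.finsetCongr fun U => ?_
  simp only [occurrencesL, mem_filter, mem_powerset, Equiv.finsetCongr_apply, hletters,
    map_subset_map, card_map, (hrestrict U).congr_left]

theorem card_occurrencesL_eq_of_iso (h : Iso l l') (u : SignedWord) :
    #(occurrencesL u l) = #(occurrencesL u l') := by
  obtain ⟨f, rfl⟩ := h
  refine card_occurrencesL_eq_of_relabel f ?_ (fun U => Relation.EqvGen.rel _ _ (Or.inl ⟨f, ?_⟩)) u
  · ext a
    simp only [mem_lettersL, mem_map, List.mem_map]
    constructor
    · rintro ⟨_, ⟨q, hq, rfl⟩, rfl⟩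
      exact ⟨q.1, ⟨q, hq, rfl⟩, rfl⟩
    · rintro ⟨_, ⟨q, hq, rfl⟩, rfl⟩
      exact ⟨(f q.1, q.2), ⟨q, hq, rfl⟩, rfl⟩
  · simp [restrictL, List.filter_map, Function.comp_def]

theorem card_occurrencesL_eq_of_move (h : Move l l') (u : SignedWord) :
    #(occurrencesL u l) = #(occurrencesL u l') := by
  obtain ⟨a, s, x, y, rfl, rfl⟩ := h
  refine card_occurrencesL_eq_of_relabel (Equiv.refl ℕ) ?_ (fun U => ?_) u
  · ext b
    simp only [lettersL, Equiv.refl_apply, mem_map_equiv, Equiv.refl_symm, List.mem_toFinset,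
      List.map_cons, List.map_append, List.mem_cons, List.mem_append]
    tauto
  · rw [Equiv.refl_toEmbedding, map_refl]
    by_cases ha : a ∈ U
    · refine Relation.EqvGen.rel _ _ (Or.inr ⟨a, s, restrictL U x, restrictL U y, ?_, ?_⟩) <;>
        simp [restrictL, ha]
    · rw [show restrictL U ((a, s) :: (x ++ (a, s) :: y)) =
          restrictL U (x ++ (a, !s) :: (y ++ [(a, !s)])) by simp [restrictL, ha]]
      exact Relation.EqvGen.refl _

theorem card_occurrencesL_eq_of_cyclicEquivL (h : CyclicEquivL l l') (u : SignedWord) :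
    #(occurrencesL u l) = #(occurrencesL u l') := by
  induction h with
  | rel _ _ hstep =>
    exact hstep.elim (card_occurrencesL_eq_of_iso · u) (card_occurrencesL_eq_of_move · u)
  | refl => rfl
  | symm _ _ _ ih => exact ih.symm
  | trans _ _ _ _ _ ih₁ ih₂ => exact ih₁.trans ih₂

end Relabel

theorem Ncount_wordInvariant (F : Type*) [Field F] (u : SignedWord) :
    WordInvariant F (fun w => (Ncount u w : F)) := fun w w' h => by
  simp only [Ncount_eq_card_occurrencesL, card_occurrencesL_eq_of_cyclicEquivL h]

theorem lettersL_delete (w : SignedWord) (T : Finset ℕ) :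
    lettersL (w.delete T).1 = w.letters \ T := by
  ext a
  simp only [SignedWord.letters, SignedWord.delete, mem_lettersL, List.mem_filter, mem_sdiff,
    decide_eq_true_eq]
  constructor
  · rintro ⟨p, ⟨hp, hT⟩, rfl⟩
    exact ⟨⟨p, hp, rfl⟩, hT⟩
  · rintro ⟨⟨p, hp, rfl⟩, hT⟩
    exact ⟨p, ⟨hp, hT⟩, rfl⟩

theorem restrictL_delete_of_disjoint (w : SignedWord) {T U : Finset ℕ} (h : Disjoint U T) :
    restrictL U (w.delete T).1 = restrictL U w.1 := by
  simp only [restrictL, SignedWord.delete, List.filter_filter]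
  refine List.filter_congr fun p _ => ?_
  by_cases hU : p.1 ∈ U
  · simp [hU, disjoint_left.mp h hU]
  · simp [hU]

theorem occurrencesL_delete (u w : SignedWord) (T : Finset ℕ) :
    occurrencesL u (w.delete T).1 = {U ∈ occurrencesL u w.1 | Disjoint U T} := by
  ext U
  simp only [occurrencesL, mem_filter, mem_powerset, lettersL_delete, subset_sdiff]
  constructor
  · rintro ⟨⟨hU, hT⟩, hcard, hequiv⟩
    exact ⟨⟨hU, hcard, restrictL_delete_of_disjoint w hT ▸ hequiv⟩, hT⟩
  · rintro ⟨⟨hU, hcard, hequiv⟩, hT⟩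
    exact ⟨⟨hU, hT⟩, hcard, (restrictL_delete_of_disjoint w hT).symm ▸ hequiv⟩

theorem prolong_Ncount (F : Type*) [Field F] (u w : SignedWord) (S : Finset ℕ) :
    prolong F (fun w => (Ncount u w : F)) w S = #{U ∈ occurrencesL u w.1 | S ⊆ U} := by
  simp only [prolong, Ncount_eq_card_occurrencesL, occurrencesL_delete]
  exact sum_powerset_neg_one_pow_card_mul_card_filter_disjoint _ S

theorem Ncount_finiteType_general (F : Type*) [Field F] (u : SignedWord) :
    WordInvariant F (fun w => (Ncount u w : F)) ∧
    FiniteTypeLe F u.numLetters (fun w => (Ncount u w : F)) := by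
  refine ⟨Ncount_wordInvariant F u, Ncount_wordInvariant F u, fun w S _ hS => ?_⟩
  have hnone : {U ∈ occurrencesL u w.1 | S ⊆ U} = ∅ := by
    refine filter_eq_empty_iff.mpr fun U hU hSU => ?_
    have hcard := card_eq_of_mem_occurrencesL hU
    exact absurd (card_le_card hSU) (by omega)
  rw [prolong_Ncount, hnone, card_empty, Nat.cast_zero]

/-- for every signed word `u` with `k` letters, the
subword-counting function `N_u` is a cyclic equivalence invariant and a finite
type invariant of degree ≤ `k`. -/
theorem Ncount_finiteType (F : Type*) [Field F] [CharZero F] (u : SignedWord) :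
    WordInvariant F (fun w => (Ncount u w : F)) ∧
    FiniteTypeLe F u.numLetters (fun w => (Ncount u w : F)) :=
  Ncount_finiteType_general F u
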